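/- Let p ≥ 3 be a prime and k, n, a integers with 1 ≤ k ≤ n. Define T_p(n,k,a) as the sum over all tuples (x₁,…,xₙ) with each xᵢ ∈ {1,…,p-1} and x₁+⋯+xₙ ≡ a (mod p) of ((x₁⋯x_k)/p). Then: if k is odd and p∤a, T_p(n,k,a) = (-1)^{n-k}·(a/p)·p^{(k-1)/2}·((-1/p))^{(k-1)/2}; if k is odd and p|a, T_p(n,k,a) = 0; if k is even and p∤a, T_p(n,k,a) = (-1)^{n+1-k}·((-1/p))^{k/2}·p^{(k-2)/2}; if k is even and p|a, T_p(n,k,a) = (-1)^{n-k}·(p-1)·((-1/p))^{k/2}·p^{(k-2)/2}. -/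

import Mathlib

/-- `Tsum p n k a` is the sum over all tuples `(x₁,…,xₙ)` of nonzero residues mod `p`
with `x₁+⋯+xₙ ≡ a (mod p)` of the Legendre symbol `((x₁⋯x_k)/p)`. -/
def Tsum (p : ℕ) [Fact p.Prime] (n k : ℕ) (a : ℤ) : ℤ :=
  ∑ x ∈ Finset.univ.filter
      (fun x : Fin n → ZMod p => (∀ i, x i ≠ 0) ∧ ∑ i, x i = (a : ZMod p)),
    quadraticChar (ZMod p) (∏ i ∈ Finset.univ.filter (fun i : Fin n => (i : ℕ) < k), x i)

/-! Because `χ(0) = 0`, `T_p(n,k,a)` is the value at `a` of the additive convolution of `k` copies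
of the quadratic character `χ` with `n - k` copies of the indicator of `𝔽_p^×`. That indicator is
`1 - δ₀`, and convolving with the constant `1` gives the total mass, which vanishes since
`∑ χ = 0`; so each of the last `n - k` factors only contributes a sign. The Jacobi sum gives
`χ * χ = χ(-1) (p δ₀ - 1)`, and then `χ * χ * χ = χ(-1) p χ`, so the convolution powers of `χ`
are `(χ(-1) p)^m χ` and `(χ(-1) p)^m (χ * χ)` in odd and even degree. -/

open Finset

section IterConv

variable {G R : Type*} [AddCommGroup G] [Fintype G] [DecidableEq G] [CommSemiring R]

def iterConv {n : ℕ} (f : Fin n → G → R) (a : G) : R :=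
  ∑ x ∈ univ.filter (fun x : Fin n → G => ∑ i, x i = a), ∏ i, f i (x i)

lemma iterConv_zero (f : Fin 0 → G → R) (a : G) : iterConv f a = if a = 0 then 1 else 0 := by
  by_cases h : a = 0 <;> simp [iterConv, h, eq_comm]

lemma iterConv_succ {n : ℕ} (f : Fin (n + 1) → G → R) (a : G) :
    iterConv f a = ∑ t, f (Fin.last n) t * iterConv (fun i => f i.castSucc) (a - t) := by
  simp only [iterConv, sum_filter, mul_sum, mul_ite, mul_zero]
  rw [← Fintype.sum_prod_type', ← (Fin.snocEquiv fun _ => G).sum_comp]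
  refine Fintype.sum_congr _ _ fun ⟨t, y⟩ => ?_
  simp only [Fin.snocEquiv_apply, Fin.sum_univ_castSucc, Fin.prod_univ_castSucc,
    Fin.snoc_castSucc, Fin.snoc_last, eq_sub_iff_add_eq, mul_comm]

lemma sum_iterConv {n : ℕ} (f : Fin n → G → R) : ∑ a, iterConv f a = ∏ i, ∑ t, f i t := by
  rw [Fintype.prod_sum]
  exact sum_fiberwise univ (fun x : Fin n → G => ∑ i, x i) _

end IterConv

section QuadraticChar

variable {F : Type*} [Field F] [Fintype F] [DecidableEq F]

lemma sum_quadraticChar_mul_quadraticChar_sub (hF : ringChar F ≠ 2) (a : F) :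
    ∑ t, (quadraticChar F t * quadraticChar F (a - t) : ℤ) =
      (if a = 0 then (Fintype.card F : ℤ) - 1 else -1) * quadraticChar F (-1) := by
  set χ := quadraticChar F
  split_ifs with ha
  · have hsq : ∀ t, χ t * χ (a - t) = χ (-1) * (1 : MulChar F ℤ) t := by
      intro t
      rw [ha, zero_sub, ← (quadraticChar_isQuadratic F).sq_eq_one, neg_eq_neg_one_mul, map_mul,
        sq, MulChar.coeToFun_mul, Pi.mul_apply]
      ring
    rw [sum_congr rfl fun t _ => hsq t, ← mul_sum, MulChar.sum_one_eq_card_units,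
      Fintype.card_units, Nat.cast_sub Fintype.card_pos]
    push_cast
    ring
  · rw [← Equiv.sum_comp (Equiv.mulLeft₀ a ha)]
    have hscale : ∀ s, χ (a * s) * χ (a - a * s) = χ s * χ (1 - s) := by
      intro s
      rw [show a - a * s = a * (1 - s) by ring, map_mul, map_mul]
      linear_combination χ s * χ (1 - s) * quadraticChar_sq_one ha
    simp only [Equiv.mulLeft₀_apply, hscale]
    rw [show ∑ s, χ s * χ (1 - s) = jacobiSum χ χ⁻¹ by rw [(quadraticChar_isQuadratic F).inv]; rfl,
      jacobiSum_nontrivial_inv (quadraticChar_ne_one hF)]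
    ring

variable (F) in
def quadraticCharConv (k : ℕ) : F → ℤ :=
  iterConv fun _ : Fin k => (quadraticChar F : F → ℤ)

lemma quadraticCharConv_succ (k : ℕ) (a : F) :
    quadraticCharConv F (k + 1) a = ∑ t, quadraticChar F t * quadraticCharConv F k (a - t) :=
  iterConv_succ _ a

lemma quadraticCharConv_one (a : F) : quadraticCharConv F 1 a = quadraticChar F a := by
  rw [← zero_add 1, quadraticCharConv_succ]
  simp [quadraticCharConv, iterConv_zero, sub_eq_zero]

lemma quadraticCharConv_succ_of_eq_mul {k : ℕ} {C : ℤ} (hF : ringChar F ≠ 2)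
    (h : ∀ b, quadraticCharConv F k b = quadraticChar F b * C) (a : F) :
    quadraticCharConv F (k + 1) a =
      (if a = 0 then (Fintype.card F : ℤ) - 1 else -1) * quadraticChar F (-1) * C := by
  simp only [quadraticCharConv_succ, h, ← mul_assoc, ← sum_mul,
    sum_quadraticChar_mul_quadraticChar_sub hF]

lemma quadraticCharConv_two_mul_add_one (hF : ringChar F ≠ 2) (m : ℕ) (a : F) :
    quadraticCharConv F (2 * m + 1) a =
      quadraticChar F a * (quadraticChar F (-1) * Fintype.card F) ^ m := by
  induction m generalizing a with
  | zero => simp [quadraticCharConv_one]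
  | succ m ih =>
    set C := (quadraticChar F (-1) * Fintype.card F : ℤ) ^ m
    have hterm : ∀ t, quadraticChar F t * quadraticCharConv F (2 * m + 2) (a - t) =
        quadraticChar F (-1) * C *
          ((if t = a then Fintype.card F * quadraticChar F t else 0) - quadraticChar F t) := by
      intro t
      rw [quadraticCharConv_succ_of_eq_mul hF ih]
      by_cases h : t = a
      · simp only [h, sub_self, if_true]; ring
      · rw [if_neg (sub_ne_zero.mpr (Ne.symm h)), if_neg h]; ring
    rw [show 2 * (m + 1) + 1 = 2 * m + 2 + 1 by ring, quadraticCharConv_succ,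
      sum_congr rfl fun t _ => hterm t, ← mul_sum, sum_sub_distrib, sum_ite_eq' univ a,
      quadraticChar_sum_zero hF]
    simp only [mem_univ, if_true, sub_zero, pow_succ, C]
    ring

lemma quadraticCharConv_two_mul_add_two (hF : ringChar F ≠ 2) (m : ℕ) (a : F) :
    quadraticCharConv F (2 * m + 2) a =
      (if a = 0 then (Fintype.card F : ℤ) - 1 else -1) * quadraticChar F (-1) *
        (quadraticChar F (-1) * Fintype.card F) ^ m :=
  quadraticCharConv_succ_of_eq_mul hF (quadraticCharConv_two_mul_add_one hF m) a

variable (F) in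
def charWeights (n k : ℕ) (i : Fin n) (t : F) : ℤ :=
  if (i : ℕ) < k then quadraticChar F t else if t = 0 then 0 else 1

lemma prod_charWeights {n : ℕ} (k : ℕ) (x : Fin n → F) :
    ∏ i, charWeights F n k i (x i) = if ∀ i, x i ≠ 0 then
      quadraticChar F (∏ i ∈ univ.filter (fun i : Fin n => (i : ℕ) < k), x i) else 0 := by
  split_ifs with hx
  · rw [map_prod, prod_filter]
    exact prod_congr rfl fun i _ => by simp [charWeights, hx i]
  · obtain ⟨i, hi⟩ := not_forall_not.mp hx
    exact prod_eq_zero (mem_univ i) (by simp [charWeights, hi])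

lemma iterConv_charWeights_self (k : ℕ) :
    iterConv (charWeights F k k) = quadraticCharConv F k := by
  unfold quadraticCharConv
  congr with i t
  exact if_pos i.isLt

lemma iterConv_charWeights_succ (hF : ringChar F ≠ 2) {n k : ℕ} (hk : 1 ≤ k) (hkn : k ≤ n)
    (a : F) : iterConv (charWeights F (n + 1) k) a = -iterConv (charWeights F n k) a := by
  have htotal : ∑ b, iterConv (charWeights F n k) b = 0 := by
    rw [sum_iterConv]
    have hk0 : 0 < k := hk
    exact prod_eq_zero (mem_univ ⟨0, by omega⟩)
      (by simpa [charWeights, hk0] using quadraticChar_sum_zero hF)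
  set g := iterConv (charWeights F n k)
  have hterm : ∀ t, charWeights F (n + 1) k (Fin.last n) t * g (a - t) =
      g (a - t) - if t = 0 then g a else 0 := by
    intro t
    by_cases ht : t = 0 <;> simp [charWeights, ht, hkn]
  have hrestrict : (fun i : Fin n => charWeights F (n + 1) k i.castSucc) = charWeights F n k := rfl
  rw [iterConv_succ, hrestrict, sum_congr rfl fun t _ => hterm t, sum_sub_distrib,
    sum_ite_eq' univ 0, Fintype.sum_equiv (Equiv.subLeft a) (fun t => g (a - t)) g fun _ => rfl,
    htotal]
  simp

lemma iterConv_charWeights (hF : ringChar F ≠ 2) {n k : ℕ} (hk : 1 ≤ k) (hkn : k ≤ n) (a : F) :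
    iterConv (charWeights F n k) a = (-1) ^ (n - k) * quadraticCharConv F k a := by
  induction n, hkn using Nat.le_induction generalizing a with
  | base => simp [iterConv_charWeights_self]
  | succ n hkn ih =>
    rw [iterConv_charWeights_succ hF hk hkn, ih, Nat.sub_add_comm hkn, pow_succ]
    ring

end QuadraticChar

lemma Tsum_eq_iterConv_charWeights (p : ℕ) [Fact p.Prime] (n k : ℕ) (a : ℤ) :
    Tsum p n k a = iterConv (charWeights (ZMod p) n k) (a : ZMod p) := by
  simp only [Tsum, iterConv, prod_charWeights, ← sum_filter, filter_filter, and_comm]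

/-- the full evaluation of `T_p(n,k,a)` in the four cases according to the
parity of `k` and whether `p ∣ a`. -/
theorem Tsum_eval (p : ℕ) [Fact p.Prime] (hp : 3 ≤ p) (n k : ℕ)
    (hk : 1 ≤ k) (hkn : k ≤ n) (a : ℤ) :
    (Odd k → ¬ (p : ℤ) ∣ a →
      Tsum p n k a = (-1) ^ (n - k) * legendreSym p a * (p : ℤ) ^ ((k - 1) / 2) *
        (legendreSym p (-1)) ^ ((k - 1) / 2)) ∧
    (Odd k → (p : ℤ) ∣ a → Tsum p n k a = 0) ∧
    (Even k → ¬ (p : ℤ) ∣ a →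
      Tsum p n k a = (-1) ^ (n + 1 - k) * (legendreSym p (-1)) ^ (k / 2) *
        (p : ℤ) ^ ((k - 2) / 2)) ∧
    (Even k → (p : ℤ) ∣ a →
      Tsum p n k a = (-1) ^ (n - k) * ((p : ℤ) - 1) * (legendreSym p (-1)) ^ (k / 2) *
        (p : ℤ) ^ ((k - 2) / 2)) := by
  have hF : ringChar (ZMod p) ≠ 2 := by rw [ZMod.ringChar_zmod_n]; omega
  have hT : Tsum p n k a = (-1) ^ (n - k) * quadraticCharConv (ZMod p) k a := by
    rw [Tsum_eq_iterConv_charWeights, iterConv_charWeights hF hk hkn]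
  have hχ : ∀ b : ℤ, legendreSym p b = quadraticChar (ZMod p) b := fun _ => rfl
  simp only [hT, hχ, Int.cast_neg, Int.cast_one, ← ZMod.intCast_zmod_eq_zero_iff_dvd]
  refine ⟨?_, ?_, ?_, ?_⟩ <;> rintro ⟨m, rfl⟩ ha
  · rw [quadraticCharConv_two_mul_add_one hF, ZMod.card, show (2 * m + 1 - 1) / 2 = m by omega]
    ring
  · rw [quadraticCharConv_two_mul_add_one hF, ha, MulChar.map_zero]
    ring
  all_goals
    obtain ⟨j, rfl⟩ : ∃ j, m = j + 1 := ⟨m - 1, by omega⟩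
    rw [show j + 1 + (j + 1) = 2 * j + 2 by ring] at hkn ⊢
    rw [quadraticCharConv_two_mul_add_two hF, ZMod.card, show (2 * j + 2) / 2 = j + 1 by omega,
      show (2 * j + 2 - 2) / 2 = j by omega]
  · rw [if_neg ha, show n + 1 - (2 * j + 2) = n - (2 * j + 2) + 1 by omega]
    ring
  · rw [if_pos ha]
    ring
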